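/- arXiv:1509.01054 — 6 statements merged into one kernel-verified Lean document; each statement's English description precedes it below -/
import Mathlib

section
/- Consider the Lorenz-84 general circulation model X₁' = -X₂² - X₃² - aX₁ + aF, X₂' = X₁X₂ - bX₁X₃ - X₂ + G, X₃' = bX₁X₂ + X₁X₃ - X₃ with a > 0 and b > -1. Let V(X) = X₁² + X₂² + X₃², ā = min{a, 1}, and b̄ = √(a²F² + G²). Then along solutions, V'(X) ≤ -2ā(X₁² + X₂² + X₃²) + 2b̄√(X₁² + X₂² + X₃²). -/
/-- Lyapunov derivative estimate for the Lorenz-84 general circulation model with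
`a > 0`, `b > -1`: along solutions `V'(X) ≤ -2ā‖X‖² + 2b̄‖X‖` where `ā = min{a,1}`
and `b̄ = √(a²F² + G²)`. -/
theorem lorenz84_lyapunov_derivative
    (a b F G : ℝ) (ha : 0 < a) (hb : -1 < b)
    (abar bbar : ℝ) (habar : abar = min a 1) (hbbar : bbar = Real.sqrt (a^2*F^2 + G^2)) :
    ∀ X₁ X₂ X₃ : ℝ,
      (2*X₁) * (-X₂^2 - X₃^2 - a*X₁ + a*F)
        + (2*X₂) * (X₁*X₂ - b*X₁*X₃ - X₂ + G)
        + (2*X₃) * (b*X₁*X₂ + X₁*X₃ - X₃)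
      ≤ -2*abar * (X₁^2 + X₂^2 + X₃^2)
        + 2*bbar * Real.sqrt (X₁^2 + X₂^2 + X₃^2) := by
  intro X₁ X₂ X₃
  set s := Real.sqrt (X₁^2 + X₂^2 + X₃^2) with hs
  have hsum : (0:ℝ) ≤ X₁^2 + X₂^2 + X₃^2 := by positivity
  have hs2 : s^2 = X₁^2 + X₂^2 + X₃^2 := Real.sq_sqrt hsum
  have hs0 : 0 ≤ s := Real.sqrt_nonneg _
  have hb2 : bbar^2 = a^2*F^2 + G^2 := by
    rw [hbbar]; exact Real.sq_sqrt (by positivity)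
  have hb0 : 0 ≤ bbar := hbbar ▸ Real.sqrt_nonneg _
  have h1 : abar ≤ a := habar ▸ min_le_left a 1
  have h2 : abar ≤ 1 := habar ▸ min_le_right a 1
  have hcs : a*F*X₁ + G*X₂ ≤ bbar * s := by
    nlinarith [sq_nonneg (a*F*X₂ - G*X₁), sq_nonneg (bbar*s - (a*F*X₁ + G*X₂)),
      sq_nonneg (bbar*s + (a*F*X₁ + G*X₂)), mul_nonneg hb0 hs0, sq_nonneg X₃,
      mul_nonneg (mul_nonneg hb0 hs0) (mul_nonneg hb0 hs0)]
  nlinarith [sq_nonneg X₁, sq_nonneg X₂, sq_nonneg X₃]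
end

section
/- Consider the Lorenz-84 general circulation model as above with a > 0 and b > -1, V(X) = X₁² + X₂² + X₃², ā = min{a,1}, b̄ = √(a²F² + G²), and B = (1 + b̄)/ā. Then for all X with ‖X‖ ≥ B, one has V'(X) ≤ -(2ā B² - 2b̄ B) < 0; that is, V is strictly decreasing along solutions outside the ball of radius B. -/
/-- For the Lorenz-84 model with `a > 0`, `b > -1`, `V(X) = ‖X‖²`, `ā = min{a,1}`,
`b̄ = √(a²F²+G²)`, `B = (1+b̄)/ā`: for all `X` with `‖X‖ ≥ B`,
`V'(X) ≤ -(2āB² - 2b̄B) < 0`. -/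
theorem lorenz84_decreasing_outside_ball
    (a b F G : ℝ) (ha : 0 < a) (hb : -1 < b)
    (abar bbar B : ℝ) (habar : abar = min a 1) (hbbar : bbar = Real.sqrt (a^2*F^2 + G^2))
    (hB : B = (1 + bbar)/abar) :
    ∀ X₁ X₂ X₃ : ℝ, B ≤ Real.sqrt (X₁^2 + X₂^2 + X₃^2) →
      (2*X₁) * (-X₂^2 - X₃^2 - a*X₁ + a*F)
        + (2*X₂) * (X₁*X₂ - b*X₁*X₃ - X₂ + G)
        + (2*X₃) * (b*X₁*X₂ + X₁*X₃ - X₃)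
      ≤ -(2*abar*B^2 - 2*bbar*B) ∧ -(2*abar*B^2 - 2*bbar*B) < 0 := by
  have habar_pos : 0 < abar := by rw [habar]; exact lt_min ha one_pos
  have hbbar_nonneg : 0 ≤ bbar := hbbar ▸ Real.sqrt_nonneg _
  have hbbar_sq : bbar^2 = a^2*F^2 + G^2 := by
    rw [hbbar]; exact Real.sq_sqrt (by positivity)
  have hBpos : 0 < B := by rw [hB]; positivity
  have hBab : abar * B = 1 + bbar := by
    rw [hB]; field_simp
  intro X₁ X₂ X₃ hX
  set s := Real.sqrt (X₁^2 + X₂^2 + X₃^2) with hs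
  have hs_nonneg : 0 ≤ s := Real.sqrt_nonneg _
  have hs_sq : s^2 = X₁^2 + X₂^2 + X₃^2 := Real.sq_sqrt (by positivity)
  have haa : abar ≤ a := habar ▸ min_le_left _ _
  have ha1 : abar ≤ 1 := habar ▸ min_le_right _ _
  have hcs : a*F*X₁ + G*X₂ ≤ bbar * s := by
    nlinarith [sq_nonneg (a*F*X₂ - G*X₁), sq_nonneg X₃, mul_nonneg hbbar_nonneg hs_nonneg,
      sq_nonneg (bbar*s - (a*F*X₁ + G*X₂)), sq_nonneg (bbar*s + (a*F*X₁ + G*X₂))]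
  constructor
  · have h1 : (2*X₁) * (-X₂^2 - X₃^2 - a*X₁ + a*F)
        + (2*X₂) * (X₁*X₂ - b*X₁*X₃ - X₂ + G)
        + (2*X₃) * (b*X₁*X₂ + X₁*X₃ - X₃)
        = -2*a*X₁^2 - 2*X₂^2 - 2*X₃^2 + 2*(a*F*X₁ + G*X₂) := by ring
    rw [h1]
    have h2 : -2*a*X₁^2 - 2*X₂^2 - 2*X₃^2 ≤ -2*abar*s^2 := by nlinarith [sq_nonneg X₁]
    have h3 : -2*abar*s^2 + 2*bbar*s ≤ -(2*abar*B^2 - 2*bbar*B) := by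
      nlinarith [mul_le_mul_of_nonneg_left hX habar_pos.le, sq_nonneg (s - B),
        mul_nonneg hbbar_nonneg (sub_nonneg.mpr hX)]
    linarith
  · nlinarith [mul_pos habar_pos hBpos]
end

section
/- Let F: ℝᵐ → ℝᵐ, f: ℝⁿ → ℝⁿ, g: ℝᵐ → ℝⁿ be continuous, μ ≠ 0 real, and suppose ‖g(x)‖ ≤ M_g for all x. Suppose there is a C¹ Lyapunov function V: ℝⁿ → ℝ and constants B ≥ 0, M₀ > 0 and functions a, b, c defined for r ≥ B such that on ‖y‖ ≥ B: (i) V(y) ≥ a(‖y‖) with a continuous increasing, a(B) > 0, a(r) → ∞; (ii) ∇V(y)·f(y) ≤ -b(‖y‖) with b increasing, b(B) > 0; (iii) ‖∇V(y)‖ ≤ c(‖y‖) with 0 < c(r) ≤ M₀ b(r). Then for |μ| sufficiently small (namely |μ| ≤ (1/(M₀M_g))(1 - β/b(B)) for some 0 < β < b(B)), the solutions of the perturbed system y' = f(y) + μ g(x(t)) are uniformly ultimately bounded: there exists B₀ > 0 such that for every α > 0 there exists T(α) > 0 with the property that ‖y₀‖ ≤ α implies ‖y(t; t₀, y₀)‖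 < B₀ for all t ≥ t₀ + T(α), uniformly over all choices of the continuous bounded forcing x(t) and all t₀ ≥ 0. -/
/-!
Outside the ball of radius `B`, the derivative of `V` along any perturbed trajectory is at most
`-β`, uniformly in the forcing `x`: the perturbation contributes at most
`|μ| M₀ M_g b(‖y‖) ≤ (1 - β / b(B)) b(‖y‖)`. Hence a trajectory starting in the ball of radius `α`
enters the ball of radius `B` within time `(max_{‖y‖ ≤ α} V - a(B)) / β`, and from then on
`V ≤ K := max_{‖y‖ ≤ B} V`, since from the last time the trajectory was in that ball `V` only
decreases. As `a → ∞`, `a > K` beyond some radius `B₀`, which therefore bounds the trajectory.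
-/

open scoped RealInnerProductSpace
open Set

section Scalar

variable {φ φ' ρ : ℝ → ℝ}

theorem sub_le_mul_sub_of_hasDerivAt_le {s t C : ℝ} (hst : s ≤ t)
    (hφ : ∀ u ∈ Icc s t, HasDerivAt φ (φ' u) u) (hC : ∀ u ∈ Ioo s t, φ' u ≤ C) :
    φ t - φ s ≤ C * (t - s) := by
  refine (convex_Icc s t).image_sub_le_mul_sub_of_deriv_le
    (fun u hu => (hφ u hu).continuousAt.continuousWithinAt) (fun u hu => ?_) (fun u hu => ?_)
    s (left_mem_Icc.2 hst) t (right_mem_Icc.2 hst) hst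
  all_goals rw [interior_Icc] at hu
  · exact (hφ u (Ioo_subset_Icc_self hu)).differentiableAt.differentiableWithinAt
  · rw [(hφ u (Ioo_subset_Icc_self hu)).deriv]
    exact hC u hu

theorem exists_mem_Icc_lt_of_hasDerivAt_le_neg {t₀ T β B L : ℝ} (hT : 0 ≤ T)
    (hφ : ∀ u ∈ Icc t₀ (t₀ + T), HasDerivAt φ (φ' u) u)
    (hφ' : ∀ u ∈ Icc t₀ (t₀ + T), B ≤ ρ u → φ' u ≤ -β)
    (hL : B ≤ ρ (t₀ + T) → L ≤ φ (t₀ + T)) (hβT : φ t₀ - L < β * T) :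
    ∃ u ∈ Icc t₀ (t₀ + T), ρ u < B := by
  by_contra! hout
  have hdecay := sub_le_mul_sub_of_hasDerivAt_le (by linarith) hφ fun u hu =>
    hφ' u (Ioo_subset_Icc_self hu) (hout u (Ioo_subset_Icc_self hu))
  have hend := hL (hout _ (right_mem_Icc.2 (by linarith)))
  simp only [add_sub_cancel_left] at hdecay
  linarith

theorem le_of_hasDerivAt_nonpos_outside {t₁ t B K : ℝ} (ht : t₁ ≤ t)
    (hφ : ∀ u ∈ Icc t₁ t, HasDerivAt φ (φ' u) u) (hρ : ContinuousOn ρ (Icc t₁ t))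
    (hφ' : ∀ u ∈ Icc t₁ t, B < ρ u → φ' u ≤ 0) (hK : ∀ u ∈ Icc t₁ t, ρ u ≤ B → φ u ≤ K)
    (h₁ : ρ t₁ ≤ B) : φ t ≤ K := by
  have hclosed : IsClosed (Icc t₁ t ∩ ρ ⁻¹' Iic B) :=
    hρ.preimage_isClosed_of_isClosed isClosed_Icc isClosed_Iic
  obtain ⟨s, ⟨hs, hρs⟩, hlast⟩ :=
    (isCompact_Icc.of_isClosed_subset hclosed inter_subset_left).exists_isGreatest
      ⟨t₁, left_mem_Icc.2 ht, h₁⟩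
  have hsub : ∀ u ∈ Icc s t, u ∈ Icc t₁ t := fun u hu => ⟨hs.1.trans hu.1, hu.2⟩
  have hout : ∀ u ∈ Ioo s t, B < ρ u := fun u hu => by
    by_contra! hu'
    exact (hlast ⟨hsub u (Ioo_subset_Icc_self hu), hu'⟩).not_gt hu.1
  have hdecay := sub_le_mul_sub_of_hasDerivAt_le hs.2 (fun u hu => hφ u (hsub u hu))
    fun u hu => hφ' u (hsub u (Ioo_subset_Icc_self hu)) (hout u hu)
  linarith [hK s hs hρs]

theorem le_of_hasDerivAt_le_neg {t₀ T β B L K : ℝ} (hT : 0 ≤ T) (hβ : 0 ≤ β)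
    (hφ : ∀ u, t₀ ≤ u → HasDerivAt φ (φ' u) u) (hρ : ContinuousOn ρ (Ici t₀))
    (hφ' : ∀ u, t₀ ≤ u → B ≤ ρ u → φ' u ≤ -β)
    (hL : ∀ u, B ≤ ρ u → L ≤ φ u) (hK : ∀ u, ρ u ≤ B → φ u ≤ K) (hβT : φ t₀ - L < β * T) :
    ∀ t, t₀ + T ≤ t → φ t ≤ K := by
  intro t ht
  obtain ⟨t₁, ht₁, hρt₁⟩ := exists_mem_Icc_lt_of_hasDerivAt_le_neg hT
    (fun u hu => hφ u hu.1) (fun u hu => hφ' u hu.1) (hL _) hβT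
  have hsub : Icc t₁ t ⊆ Ici t₀ := fun u hu => ht₁.1.trans hu.1
  exact le_of_hasDerivAt_nonpos_outside (ht₁.2.trans ht) (fun u hu => hφ u (hsub hu))
    (hρ.mono hsub) (fun u hu hBu => (hφ' u (hsub hu) hBu.le).trans (neg_nonpos.2 hβ))
    (fun u _ => hK u) hρt₁.le

end Scalar

section InnerProductSpace

variable {E : Type*} [NormedAddCommGroup E] [InnerProductSpace ℝ E]

theorem HasGradientAt.hasDerivAt_comp [CompleteSpace E] {V : E → ℝ} {G : E} {y : ℝ → E}
    {y' : E} {t : ℝ} (hV : HasGradientAt V G (y t)) (hy : HasDerivAt y y' t) :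
    HasDerivAt (fun s => V (y s)) ⟪G, y'⟫ t := by
  simpa [Function.comp_def] using (hasGradientAt_iff_hasFDerivAt.mp hV).comp_hasDerivAt t hy

theorem inner_add_smul_le_neg {G v p : E} {μ b₀ b c M₀ Mg β : ℝ} (hv : ⟪G, v⟫ ≤ -b)
    (hG : ‖G‖ ≤ c) (hc : c ≤ M₀ * b) (hp : ‖p‖ ≤ Mg) (hb₀ : 0 < b₀) (hb : b₀ ≤ b) (hβ : 0 ≤ β)
    (hμ : |μ| * (M₀ * Mg) ≤ 1 - β / b₀) : ⟪G, v + μ • p⟫ ≤ -β := by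
  have hc₀ : 0 ≤ c := (norm_nonneg G).trans hG
  have hMg : 0 ≤ Mg := (norm_nonneg p).trans hp
  have hperturb : μ * ⟪G, p⟫ ≤ |μ| * (c * Mg) :=
    calc μ * ⟪G, p⟫ ≤ |μ| * |⟪G, p⟫| := by rw [← abs_mul]; exact le_abs_self _
      _ ≤ |μ| * (‖G‖ * ‖p‖) := by gcongr; exact abs_real_inner_le_norm G p
      _ ≤ |μ| * (c * Mg) := by gcongr
  calc ⟪G, v + μ • p⟫ = ⟪G, v⟫ + μ * ⟪G, p⟫ := by rw [inner_add_right, real_inner_smul_right]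
    _ ≤ -b + |μ| * (M₀ * b * Mg) := add_le_add hv (hperturb.trans (by gcongr))
    _ = -b + |μ| * (M₀ * Mg) * b := by ring
    _ ≤ -b + (1 - β / b₀) * b := by gcongr; linarith
    _ = -(β * (b / b₀)) := by ring
    _ ≤ -β := by
      rw [neg_le_neg_iff]
      exact le_mul_of_one_le_right hβ ((one_le_div hb₀).2 hb)

end InnerProductSpace

theorem uniform_ultimate_boundedness_general
    {m n : ℕ}
    (F : EuclideanSpace ℝ (Fin m) → EuclideanSpace ℝ (Fin m))
    (f : EuclideanSpace ℝ (Fin n) → EuclideanSpace ℝ (Fin n))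
    (g : EuclideanSpace ℝ (Fin m) → EuclideanSpace ℝ (Fin n))
    (μ : ℝ)
    (Mg : ℝ) (hMg : 0 < Mg) (hgbd : ∀ x, ‖g x‖ ≤ Mg)
    (V : EuclideanSpace ℝ (Fin n) → ℝ) (hV : ContDiff ℝ 1 V)
    (B M₀ : ℝ) (hB : 0 ≤ B) (hM₀ : 0 < M₀)
    (a b c : ℝ → ℝ)
    -- (i)
    (ha_incr : StrictMonoOn a (Set.Ici B))
    (ha_inf : Filter.Tendsto a Filter.atTop Filter.atTop)
    (hVa : ∀ y, B ≤ ‖y‖ → a ‖y‖ ≤ V y)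
    -- (ii)
    (hb_incr : StrictMonoOn b (Set.Ici B)) (hbB : 0 < b B)
    (hVb : ∀ y, B ≤ ‖y‖ → ⟪gradient V y, f y⟫ ≤ -b ‖y‖)
    -- (iii)
    (hcb : ∀ r, B ≤ r → c r ≤ M₀ * b r)
    (hVc : ∀ y, B ≤ ‖y‖ → ‖gradient V y‖ ≤ c ‖y‖)
    -- smallness of μ
    (β : ℝ) (hβ : 0 < β)
    (hμsmall : |μ| ≤ (1/(M₀*Mg)) * (1 - β/(b B))) :
    ∃ B₀ > 0, ∀ α > 0, ∃ T > 0,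
      ∀ (x : ℝ → EuclideanSpace ℝ (Fin m)),
        (∀ t, 0 ≤ t → HasDerivAt x (F (x t)) t) →
      ∀ (t₀ : ℝ), 0 ≤ t₀ →
      ∀ (y : ℝ → EuclideanSpace ℝ (Fin n)),
        (∀ t, t₀ ≤ t → HasDerivAt y (f (y t) + μ • g (x t)) t) →
        ‖y t₀‖ ≤ α →
        ∀ t, t₀ + T ≤ t → ‖y t‖ < B₀ := by
  have hμ : |μ| * (M₀ * Mg) ≤ 1 - β / b B := by
    rwa [one_div, inv_mul_eq_div, le_div_iff₀ (by positivity)] at hμsmall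
  have hdecay : ∀ z w, B ≤ ‖z‖ → ⟪gradient V z, f z + μ • g w⟫ ≤ -β := fun z w hz =>
    inner_add_smul_le_neg (hVb z hz) (hVc z hz) (hcb _ hz) (hgbd w) hbB
      (hb_incr.monotoneOn self_mem_Ici hz hz) hβ.le hμ
  have hVa_B : ∀ z, B ≤ ‖z‖ → a B ≤ V z := fun z hz =>
    (ha_incr.monotoneOn self_mem_Ici hz hz).trans (hVa z hz)
  have hVdiff : Differentiable ℝ V := hV.differentiable one_ne_zero
  obtain ⟨K, hK⟩ := (isCompact_closedBall 0 B).bddAbove_image hVdiff.continuous.continuousOn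
  obtain ⟨R, hR⟩ := Filter.eventually_atTop.mp (ha_inf.eventually_gt_atTop K)
  refine ⟨max R (B + 1), by positivity, fun α _ => ?_⟩
  obtain ⟨Kα, hKα⟩ := (isCompact_closedBall 0 α).bddAbove_image hVdiff.continuous.continuousOn
  refine ⟨max (Kα - a B) 0 / β + 1, by positivity, fun x _ t₀ _ y hy hy₀ t ht => ?_⟩
  have hβT : V (y t₀) - a B < β * (max (Kα - a B) 0 / β + 1) := by
    have hVy₀ : V (y t₀) ≤ Kα := hKα (mem_image_of_mem V (mem_closedBall_zero_iff.2 hy₀))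
    rw [mul_add, mul_div_cancel₀ _ hβ.ne', mul_one]
    linarith [le_max_left (Kα - a B) 0]
  have hVyt : V (y t) ≤ K := le_of_hasDerivAt_le_neg (by positivity) hβ.le
    (fun u hu => (hVdiff (y u)).hasGradientAt.hasDerivAt_comp (hy u hu))
    (fun u hu => (hy u hu).continuousAt.norm.continuousWithinAt)
    (fun u _ hBu => hdecay (y u) (x u) hBu) (fun u => hVa_B (y u))
    (fun u hu => hK (mem_image_of_mem V (mem_closedBall_zero_iff.2 hu))) hβT t ht
  by_contra! hbig
  exact (hR _ (le_of_max_le_left hbig)).not_ge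
    ((hVa _ (by linarith [le_max_right R (B + 1)])).trans hVyt)

/-- Uniform ultimate boundedness of the perturbed system `y' = f(y) + μ g(x(t))`
under Lyapunov conditions (Theorem 1 of the paper). -/
theorem uniform_ultimate_boundedness
    {m n : ℕ}
    (F : EuclideanSpace ℝ (Fin m) → EuclideanSpace ℝ (Fin m))
    (f : EuclideanSpace ℝ (Fin n) → EuclideanSpace ℝ (Fin n))
    (g : EuclideanSpace ℝ (Fin m) → EuclideanSpace ℝ (Fin n))
    (hF : Continuous F) (hf : Continuous f) (hg : Continuous g)
    (μ : ℝ) (hμ : μ ≠ 0)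
    (Mg : ℝ) (hMg : 0 < Mg) (hgbd : ∀ x, ‖g x‖ ≤ Mg)
    (V : EuclideanSpace ℝ (Fin n) → ℝ) (hV : ContDiff ℝ 1 V)
    (B M₀ : ℝ) (hB : 0 ≤ B) (hM₀ : 0 < M₀)
    (a b c : ℝ → ℝ)
    -- (i)
    (ha_cont : ContinuousOn a (Set.Ici B)) (ha_incr : StrictMonoOn a (Set.Ici B))
    (haB : 0 < a B) (ha_inf : Filter.Tendsto a Filter.atTop Filter.atTop)
    (hVa : ∀ y, B ≤ ‖y‖ → a ‖y‖ ≤ V y)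
    -- (ii)
    (hb_incr : StrictMonoOn b (Set.Ici B)) (hbB : 0 < b B)
    (hVb : ∀ y, B ≤ ‖y‖ → ⟪gradient V y, f y⟫ ≤ -b ‖y‖)
    -- (iii)
    (hc_pos : ∀ r, B ≤ r → 0 < c r) (hcb : ∀ r, B ≤ r → c r ≤ M₀ * b r)
    (hVc : ∀ y, B ≤ ‖y‖ → ‖gradient V y‖ ≤ c ‖y‖)
    -- smallness of μ
    (β : ℝ) (hβ : 0 < β) (hβb : β < b B)
    (hμsmall : |μ| ≤ (1/(M₀*Mg)) * (1 - β/(b B))) :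
    ∃ B₀ > 0, ∀ α > 0, ∃ T > 0,
      ∀ (x : ℝ → EuclideanSpace ℝ (Fin m)),
        (∀ t, 0 ≤ t → HasDerivAt x (F (x t)) t) →
      ∀ (t₀ : ℝ), 0 ≤ t₀ →
      ∀ (y : ℝ → EuclideanSpace ℝ (Fin n)),
        (∀ t, t₀ ≤ t → HasDerivAt y (f (y t) + μ • g (x t)) t) →
        ‖y t₀‖ ≤ α →
        ∀ t, t₀ + T ≤ t → ‖y t‖ < B₀ :=
  uniform_ultimate_boundedness_general F f g μ Mg hMg hgbd V hV B M₀ hB hM₀ a b c ha_incr ha_inf hVa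
    hb_incr hbB hVb hcb hVc β hβ hμsmall
end

section
/- Under conditions (i)-(iii) of the ultimate boundedness theorem, along any solution y(t) of y' = f(y) + μ g(x(t)) with |μ| M₀ M_g ≤ 1 - β/b(B), on any interval [s₂, s₁] where ‖y(t)‖ ≥ B holds for all t, one has dV(y(t))/dt ≤ -b(‖y(t)‖) + |μ| M_g c(‖y(t)‖) ≤ (|μ|M₀M_g - 1) b(B) ≤ -β. -/
open scoped RealInnerProductSpace

section InnerProductSpace

variable {E : Type*} [NormedAddCommGroup E] [InnerProductSpace ℝ E]

theorem HasGradientAt.comp_hasDerivAt [CompleteSpace E] {V : E → ℝ} {G v : E} {y : ℝ → E} {t : ℝ}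
    (hV : HasGradientAt V G (y t)) (hy : HasDerivAt y v t) :
    HasDerivAt (fun s => V (y s)) ⟪G, v⟫ t := by
  have h := hV.hasFDerivAt.comp_hasDerivAt t hy
  rwa [InnerProductSpace.toDual_apply_apply] at h

theorem real_inner_add_smul_le {G F w : E} {μ C M : ℝ} (hG : ‖G‖ ≤ C) (hw : ‖w‖ ≤ M) :
    ⟪G, F + μ • w⟫ ≤ ⟪G, F⟫ + |μ| * M * C := by
  have hC : 0 ≤ C := (norm_nonneg G).trans hG
  have hperturb : μ * ⟪G, w⟫ ≤ |μ| * M * C :=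
    calc μ * ⟪G, w⟫ ≤ |μ| * |⟪G, w⟫| := by rw [← abs_mul]; exact le_abs_self _
      _ ≤ |μ| * (C * M) := by
          gcongr
          exact (abs_real_inner_le_norm G w).trans (mul_le_mul hG hw (norm_nonneg w) hC)
      _ = |μ| * M * C := by ring
  rw [inner_add_right, inner_smul_right]
  linarith

end InnerProductSpace

theorem sub_one_mul_le_neg_of_le_one_sub_div {k β d : ℝ} (hd : 0 < d) (h : k ≤ 1 - β / d) :
    (k - 1) * d ≤ -β := by
  rw [le_sub_comm, div_le_iff₀ hd] at h
  linarith

theorem lyapunov_decrease_along_solution_general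
    {m n : ℕ}
    (f : EuclideanSpace ℝ (Fin n) → EuclideanSpace ℝ (Fin n))
    (g : EuclideanSpace ℝ (Fin m) → EuclideanSpace ℝ (Fin n))
    (μ : ℝ) (Mg : ℝ) (hgbd : ∀ x, ‖g x‖ ≤ Mg)
    (V : EuclideanSpace ℝ (Fin n) → ℝ) (hV : ContDiff ℝ 1 V)
    (B M₀ : ℝ)
    (b c : ℝ → ℝ)
    (hb_incr : StrictMonoOn b (Set.Ici B)) (hbB : 0 < b B)
    (hVb : ∀ y, B ≤ ‖y‖ → ⟪gradient V y, f y⟫ ≤ -b ‖y‖)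
    (hcb : ∀ r, B ≤ r → c r ≤ M₀ * b r)
    (hVc : ∀ y, B ≤ ‖y‖ → ‖gradient V y‖ ≤ c ‖y‖)
    (β : ℝ) (hβ : 0 < β)
    (hμsmall : |μ| * M₀ * Mg ≤ 1 - β/(b B))
    (x : ℝ → EuclideanSpace ℝ (Fin m))
    (y : ℝ → EuclideanSpace ℝ (Fin n))
    (s₂ s₁ : ℝ)
    (hy : ∀ t ∈ Set.Icc s₂ s₁, HasDerivAt y (f (y t) + μ • g (x t)) t)
    (hout : ∀ t ∈ Set.Icc s₂ s₁, B ≤ ‖y t‖) :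
    ∀ t ∈ Set.Icc s₂ s₁,
      deriv (fun s => V (y s)) t ≤ -b ‖y t‖ + |μ| * Mg * c ‖y t‖ ∧
      -b ‖y t‖ + |μ| * Mg * c ‖y t‖ ≤ (|μ| * M₀ * Mg - 1) * b B ∧
      (|μ| * M₀ * Mg - 1) * b B ≤ -β := by
  intro t ht
  have hBy := hout t ht
  have hrate := sub_one_mul_le_neg_of_le_one_sub_div hbB hμsmall
  have hgain : |μ| * M₀ * Mg - 1 ≤ 0 := by
    linarith [div_pos hβ hbB]
  have hMg : 0 ≤ Mg := (norm_nonneg _).trans (hgbd (x t))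
  refine ⟨?_, ?_, hrate⟩
  · have hchain := (hV.differentiable one_ne_zero (y t)).hasGradientAt.comp_hasDerivAt (hy t ht)
    rw [hchain.deriv]
    linarith [real_inner_add_smul_le (F := f (y t)) (μ := μ) (hVc (y t) hBy) (hgbd (x t)),
      hVb (y t) hBy]
  · calc -b ‖y t‖ + |μ| * Mg * c ‖y t‖ ≤ -b ‖y t‖ + |μ| * Mg * (M₀ * b ‖y t‖) := by
          gcongr
          exact hcb _ hBy
      _ = (|μ| * M₀ * Mg - 1) * b ‖y t‖ := by ring
      _ ≤ (|μ| * M₀ * Mg - 1) * b B :=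
          mul_le_mul_of_nonpos_left (hb_incr.monotoneOn Set.self_mem_Ici hBy hBy) hgain

/-- Along a solution of `y' = f(y) + μ g(x(t))` staying outside the ball of radius `B`,
the Lyapunov function decreases at rate at least `β`:
`dV(y(t))/dt ≤ -b(‖y(t)‖) + |μ| Mg c(‖y(t)‖) ≤ (|μ|M₀Mg - 1) b(B) ≤ -β`. -/
theorem lyapunov_decrease_along_solution
    {m n : ℕ}
    (f : EuclideanSpace ℝ (Fin n) → EuclideanSpace ℝ (Fin n))
    (g : EuclideanSpace ℝ (Fin m) → EuclideanSpace ℝ (Fin n))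
    (μ : ℝ) (Mg : ℝ) (hMg : 0 < Mg) (hgbd : ∀ x, ‖g x‖ ≤ Mg)
    (V : EuclideanSpace ℝ (Fin n) → ℝ) (hV : ContDiff ℝ 1 V)
    (B M₀ : ℝ) (hB : 0 ≤ B) (hM₀ : 0 < M₀)
    (b c : ℝ → ℝ)
    (hb_incr : StrictMonoOn b (Set.Ici B)) (hbB : 0 < b B)
    (hVb : ∀ y, B ≤ ‖y‖ → ⟪gradient V y, f y⟫ ≤ -b ‖y‖)
    (hc_pos : ∀ r, B ≤ r → 0 < c r) (hcb : ∀ r, B ≤ r → c r ≤ M₀ * b r)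
    (hVc : ∀ y, B ≤ ‖y‖ → ‖gradient V y‖ ≤ c ‖y‖)
    (β : ℝ) (hβ : 0 < β) (hβb : β < b B)
    (hμsmall : |μ| * M₀ * Mg ≤ 1 - β/(b B))
    (x : ℝ → EuclideanSpace ℝ (Fin m))
    (y : ℝ → EuclideanSpace ℝ (Fin n))
    (s₂ s₁ : ℝ) (hs : s₂ ≤ s₁)
    (hy : ∀ t ∈ Set.Icc s₂ s₁, HasDerivAt y (f (y t) + μ • g (x t)) t)
    (hout : ∀ t ∈ Set.Icc s₂ s₁, B ≤ ‖y t‖) :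
    ∀ t ∈ Set.Icc s₂ s₁,
      deriv (fun s => V (y s)) t ≤ -b ‖y t‖ + |μ| * Mg * c ‖y t‖ ∧
      -b ‖y t‖ + |μ| * Mg * c ‖y t‖ ≤ (|μ| * M₀ * Mg - 1) * b B ∧
      (|μ| * M₀ * Mg - 1) * b B ≤ -β :=
  lyapunov_decrease_along_solution_general f g μ Mg hgbd V hV B M₀ b c hb_incr hbB hVb hcb hVc β hβ
    hμsmall x y s₂ s₁ hy hout
end

section
/- Let f: ℝⁿ → ℝⁿ be L_f-Lipschitz, g: ℝᵐ → ℝⁿ bounded by M_g, and let y, ȳ be two solutions of y' = f(y) + μ g(x(t)) and ȳ' = f(ȳ) + μ g(x̄(t)) respectively on [θ, θ+τ]. If ‖∫_θ^{θ+τ}[g(x(s)) - g(x̄(s))] ds‖ > C, then max_{t ∈ [θ, θ+τ]} ‖y(t) - ȳ(t)‖ > |μ| C / (2 + τ L_f). -/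
/-!
Integrating the difference of the two equations over `[θ, θ + τ]` expresses `μ ∫ (g ∘ x - g ∘ xb)`
through the values of `y - yb` at the two endpoints and `∫ (f ∘ y - f ∘ yb)`. If `‖y - yb‖ ≤ K` on
the whole interval, the endpoint terms contribute at most `2K` and, by the Lipschitz bound, the
integral term at most `τ L_f K`, so `|μ| C < (2 + τ L_f) K` and `K` cannot
be `|μ| C / (2 + τ L_f)`.
-/

open Set intervalIntegral MeasureTheory

variable {E : Type*} [NormedAddCommGroup E] [NormedSpace ℝ E]
  {f : E → E} {p q y yb : ℝ → E} {a b : ℝ}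

theorem integral_forcing_sub_eq [CompleteSpace E] (hf : Continuous f) (hab : a ≤ b)
    (hy : ∀ t ∈ Icc a b, HasDerivAt y (f (y t) + p t) t)
    (hyb : ∀ t ∈ Icc a b, HasDerivAt yb (f (yb t) + q t) t)
    (hpq : IntervalIntegrable (fun t => p t - q t) volume a b) :
    ∫ t in a..b, (p t - q t) =
      (y b - yb b) - (y a - yb a) - ∫ t in a..b, (f (y t) - f (yb t)) := by
  have hF : IntervalIntegrable (fun t => f (y t) - f (yb t)) volume a b := by
    refine ContinuousOn.intervalIntegrable ?_
    rw [uIcc_of_le hab]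
    exact (hf.comp_continuousOn fun t ht => (hy t ht).continuousAt.continuousWithinAt).sub
      (hf.comp_continuousOn fun t ht => (hyb t ht).continuousAt.continuousWithinAt)
  have hderiv : ∀ t ∈ uIcc a b, HasDerivAt (fun t => y t - yb t)
      ((f (y t) - f (yb t)) + (p t - q t)) t := by
    intro t ht
    rw [uIcc_of_le hab] at ht
    exact ((hy t ht).sub (hyb t ht)).congr_deriv (by abel)
  rw [← integral_eq_sub_of_hasDerivAt hderiv (hF.add hpq), integral_add hF hpq]
  abel

theorem norm_integral_comp_sub_le {L : NNReal} (hf : LipschitzWith L f) {K : ℝ}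
    (hab : a ≤ b) (hK : ∀ t ∈ Icc a b, ‖y t - yb t‖ ≤ K) :
    ‖∫ t in a..b, (f (y t) - f (yb t))‖ ≤ L * K * (b - a) := by
  rw [← abs_of_nonneg (sub_nonneg.2 hab)]
  refine norm_integral_le_of_norm_le_const fun t ht => ?_
  rw [uIoc_of_le hab] at ht
  calc ‖f (y t) - f (yb t)‖ ≤ L * ‖y t - yb t‖ := by
        simpa only [dist_eq_norm] using hf.dist_le_mul (y t) (yb t)
    _ ≤ L * K := by gcongr; exact hK t (Ioc_subset_Icc_self ht)

theorem norm_integral_forcing_sub_le [CompleteSpace E] {L : NNReal} (hf : LipschitzWith L f)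
    {K : ℝ} (hab : a ≤ b)
    (hy : ∀ t ∈ Icc a b, HasDerivAt y (f (y t) + p t) t)
    (hyb : ∀ t ∈ Icc a b, HasDerivAt yb (f (yb t) + q t) t)
    (hpq : IntervalIntegrable (fun t => p t - q t) volume a b)
    (hK : ∀ t ∈ Icc a b, ‖y t - yb t‖ ≤ K) :
    ‖∫ t in a..b, (p t - q t)‖ ≤ (2 + (b - a) * L) * K := by
  rw [integral_forcing_sub_eq hf.continuous hab hy hyb hpq]
  have hb := hK b (right_mem_Icc.2 hab)
  have ha := hK a (left_mem_Icc.2 hab)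
  have hF := norm_integral_comp_sub_le hf hab hK
  calc _ ≤ ‖y b - yb b‖ + ‖y a - yb a‖ + ‖∫ t in a..b, (f (y t) - f (yb t))‖ :=
        norm_sub_le_of_le (norm_sub_le _ _) le_rfl
    _ ≤ (2 + (b - a) * L) * K := by linarith

theorem forced_solutions_separate_general
    {m n : ℕ}
    (f : EuclideanSpace ℝ (Fin n) → EuclideanSpace ℝ (Fin n))
    (g : EuclideanSpace ℝ (Fin m) → EuclideanSpace ℝ (Fin n))
    (Lf : ℝ) (hLf : 0 < Lf) (hf : LipschitzWith (Real.toNNReal Lf) f)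
    (μ : ℝ) (hμ : μ ≠ 0)
    (x xb : ℝ → EuclideanSpace ℝ (Fin m))
    (θ τ : ℝ) (hτ : 0 < τ)
    (y yb : ℝ → EuclideanSpace ℝ (Fin n))
    (hy : ∀ t ∈ Set.Icc θ (θ + τ), HasDerivAt y (f (y t) + μ • g (x t)) t)
    (hyb : ∀ t ∈ Set.Icc θ (θ + τ), HasDerivAt yb (f (yb t) + μ • g (xb t)) t)
    (C : ℝ) (hC : 0 < C)
    (hint : C < ‖∫ s in θ..(θ + τ), (g (x s) - g (xb s))‖) :
    ∃ t ∈ Set.Icc θ (θ + τ), |μ| * C / (2 + τ * Lf) < ‖y t - yb t‖ := by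
  by_contra! hK
  have hD : IntervalIntegrable (fun s => g (x s) - g (xb s)) volume θ (θ + τ) :=
    intervalIntegrable_of_integral_ne_zero (norm_pos_iff.1 (hC.trans hint))
  have hbound := norm_integral_forcing_sub_le hf (by linarith) hy hyb
    (by simpa only [Pi.smul_def, smul_sub] using hD.smul μ) hK
  simp only [← smul_sub, intervalIntegral.integral_smul, norm_smul, Real.norm_eq_abs,
    add_sub_cancel_left, Real.coe_toNNReal _ hLf.le] at hbound
  rw [mul_div_cancel₀ _ (by positivity)] at hbound
  exact absurd (mul_lt_mul_of_pos_left hint (abs_pos.2 hμ)) hbound.not_gt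

/-- If the integrals of the forcings differ by more than `C` over `[θ, θ+τ]`, then two
solutions of the correspondingly forced systems separate by more than
`|μ| C / (2 + τ L_f)` somewhere on `[θ, θ+τ]`. -/
theorem forced_solutions_separate
    {m n : ℕ}
    (f : EuclideanSpace ℝ (Fin n) → EuclideanSpace ℝ (Fin n))
    (g : EuclideanSpace ℝ (Fin m) → EuclideanSpace ℝ (Fin n))
    (Lf : ℝ) (hLf : 0 < Lf) (hf : LipschitzWith (Real.toNNReal Lf) f)
    (Mg : ℝ) (hMg : 0 < Mg) (hg : ∀ x, ‖g x‖ ≤ Mg)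
    (μ : ℝ) (hμ : μ ≠ 0)
    (x xb : ℝ → EuclideanSpace ℝ (Fin m)) (hx : Continuous x) (hxb : Continuous xb)
    (θ τ : ℝ) (hτ : 0 < τ)
    (y yb : ℝ → EuclideanSpace ℝ (Fin n))
    (hy : ∀ t ∈ Set.Icc θ (θ + τ), HasDerivAt y (f (y t) + μ • g (x t)) t)
    (hyb : ∀ t ∈ Set.Icc θ (θ + τ), HasDerivAt yb (f (yb t) + μ • g (xb t)) t)
    (C : ℝ) (hC : 0 < C)
    (hint : C < ‖∫ s in θ..(θ + τ), (g (x s) - g (xb s))‖) :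
    ∃ t ∈ Set.Icc θ (θ + τ), |μ| * C / (2 + τ * Lf) < ‖y t - yb t‖ :=
  forced_solutions_separate_general f g Lf hLf hf μ hμ x xb θ τ hτ y yb hy hyb C hC hint
end

section
/- Let u(t) be a solution of the unperturbed Lorenz system with σ > 0, 0 < r < √2 - 1, b > 0, and V(u) = (1/σ)u₁² + u₂² + u₃², γ₁ = min{1, 1/σ}, γ₂ = min{1, 2-(r+1)², 2b}, γ₃ = max{1, 1/σ}. Then V(u(t)) ≤ V(u(0)) e^{-(γ₂/γ₃) t} for all t ≥ 0, and hence the origin is a globally exponentially stable equilibrium of the Lorenz system for these parameter values. -/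
/-!
The weighted energy `V = u₁²/σ + u₂² + u₃²` kills the nonlinear terms `∓u₁u₂u₃` and the
factor `σ`, leaving `V' = -2u₁² + 2(r+1)u₁u₂ - 2u₂² - 2bu₃²`. Completing the square gives
`V' ≤ -γ₂‖u‖² ≤ -(γ₂/γ₃)V`, which is negative definite precisely because `(r+1)² < 2`;
Grönwall's inequality then yields the exponential decay, and `γ₁‖u‖² ≤ V ≤ γ₃‖u‖²`
transfers it to `‖u‖²`.
-/

open Real

theorem le_mul_exp_of_hasDerivAt_le_mul {f f' : ℝ → ℝ} {K a t : ℝ}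
    (hf : ∀ s, HasDerivAt f (f' s) s) (bound : ∀ s, f' s ≤ K * f s) (hat : a ≤ t) :
    f t ≤ f a * exp (K * (t - a)) := by
  have h := le_gronwallBound_of_liminf_deriv_right_le (δ := f a) (ε := 0) (b := t)
    (fun s _ => (hf s).continuousAt.continuousWithinAt)
    (fun s _ _ hr => (hf s).hasDerivWithinAt.liminf_right_slope_le hr) le_rfl
    (fun s _ => by simpa using bound s) t ⟨hat, le_rfl⟩
  rwa [gronwallBound_ε0] at h

theorem lyapunov_exponential_decay {V V' N : ℝ → ℝ} {γ₂ γ₃ t : ℝ} (hγ₂ : 0 ≤ γ₂)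
    (hγ₃ : 0 < γ₃) (hV : ∀ s, HasDerivAt V (V' s) s) (hVN : ∀ s, V s ≤ γ₃ * N s)
    (hV' : ∀ s, V' s ≤ -γ₂ * N s) (ht : 0 ≤ t) :
    V t ≤ V 0 * exp (-(γ₂ / γ₃) * t) := by
  have bound : ∀ s, V' s ≤ -(γ₂ / γ₃) * V s := fun s => by
    have : γ₂ / γ₃ * V s ≤ γ₂ * N s := calc
      γ₂ / γ₃ * V s ≤ γ₂ / γ₃ * (γ₃ * N s) := by gcongr; exact hVN s
      _ = γ₂ * N s := by field_simp
    linarith [hV' s]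
  simpa using le_mul_exp_of_hasDerivAt_le_mul hV bound ht

theorem min_mul_sum_sq_le (a c d x y z : ℝ) :
    min a (min c d) * (x ^ 2 + y ^ 2 + z ^ 2) ≤ a * x ^ 2 + c * y ^ 2 + d * z ^ 2 := by
  have ha : min a (min c d) ≤ a := min_le_left _ _
  have hc : min a (min c d) ≤ c := (min_le_right _ _).trans (min_le_left _ _)
  have hd : min a (min c d) ≤ d := (min_le_right _ _).trans (min_le_right _ _)
  nlinarith [mul_le_mul_of_nonneg_right ha (sq_nonneg x),
    mul_le_mul_of_nonneg_right hc (sq_nonneg y), mul_le_mul_of_nonneg_right hd (sq_nonneg z)]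

theorem le_max_mul_sum_sq (a c d x y z : ℝ) :
    a * x ^ 2 + c * y ^ 2 + d * z ^ 2 ≤ max a (max c d) * (x ^ 2 + y ^ 2 + z ^ 2) := by
  have ha : a ≤ max a (max c d) := le_max_left _ _
  have hc : c ≤ max a (max c d) := (le_max_left _ _).trans (le_max_right _ _)
  have hd : d ≤ max a (max c d) := (le_max_right _ _).trans (le_max_right _ _)
  nlinarith [mul_le_mul_of_nonneg_right ha (sq_nonneg x),
    mul_le_mul_of_nonneg_right hc (sq_nonneg y), mul_le_mul_of_nonneg_right hd (sq_nonneg z)]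

namespace Lorenz

variable {σ r b : ℝ} {u₁ u₂ u₃ : ℝ → ℝ}

theorem hasDerivAt_energy (hσ : σ ≠ 0)
    (h₁ : ∀ t, HasDerivAt u₁ (σ*(-u₁ t + u₂ t)) t)
    (h₂ : ∀ t, HasDerivAt u₂ (-u₁ t * u₃ t + r * u₁ t - u₂ t) t)
    (h₃ : ∀ t, HasDerivAt u₃ (u₁ t * u₂ t - b * u₃ t) t) (t : ℝ) :
    HasDerivAt (fun t => (1/σ)*(u₁ t)^2 + (u₂ t)^2 + (u₃ t)^2)
      (-2 * u₁ t ^ 2 + 2 * (r + 1) * u₁ t * u₂ t - 2 * u₂ t ^ 2 - 2 * b * u₃ t ^ 2) t := by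
  refine ((((h₁ t).pow 2).const_mul (1/σ)).add ((h₂ t).pow 2)).add ((h₃ t).pow 2)
    |>.congr_deriv ?_
  field_simp
  ring

theorem energy_deriv_le (r b x y z : ℝ) :
    -2 * x ^ 2 + 2 * (r + 1) * x * y - 2 * y ^ 2 - 2 * b * z ^ 2
      ≤ -(x ^ 2 + (2 - (r + 1) ^ 2) * y ^ 2 + 2 * b * z ^ 2) := by
  nlinarith [sq_nonneg (x - (r + 1) * y)]

end Lorenz

open Lorenz

/-- Exponential decay of the Lyapunov function along solutions of the non-chaotic
Lorenz system (`σ > 0`, `0 < r < √2 - 1`, `b > 0`):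
`V(u(t)) ≤ V(u(0)) e^{-(γ₂/γ₃)t}`, hence the origin is globally exponentially
stable. -/
theorem lorenz_global_exponential_stability
    (σ r b : ℝ) (hσ : 0 < σ) (hr0 : 0 < r) (hr : r < Real.sqrt 2 - 1) (hb : 0 < b)
    (γ₁ γ₂ γ₃ : ℝ)
    (hγ₁ : γ₁ = min 1 (1/σ))
    (hγ₂ : γ₂ = min 1 (min (2 - (r + 1)^2) (2*b)))
    (hγ₃ : γ₃ = max 1 (1/σ))
    (u₁ u₂ u₃ : ℝ → ℝ)
    (h₁ : ∀ t, HasDerivAt u₁ (σ*(-u₁ t + u₂ t)) t)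
    (h₂ : ∀ t, HasDerivAt u₂ (-u₁ t * u₃ t + r * u₁ t - u₂ t) t)
    (h₃ : ∀ t, HasDerivAt u₃ (u₁ t * u₂ t - b * u₃ t) t) :
    ∀ t, 0 ≤ t →
      (1/σ)*(u₁ t)^2 + (u₂ t)^2 + (u₃ t)^2
        ≤ ((1/σ)*(u₁ 0)^2 + (u₂ 0)^2 + (u₃ 0)^2) * Real.exp (-(γ₂/γ₃) * t) ∧
      γ₁ * ((u₁ t)^2 + (u₂ t)^2 + (u₃ t)^2)
        ≤ γ₃ * ((u₁ 0)^2 + (u₂ 0)^2 + (u₃ 0)^2) * Real.exp (-(γ₂/γ₃) * t) := by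
  have hr1 : (r + 1) ^ 2 < 2 := by
    nlinarith [Real.sq_sqrt (zero_le_two : (0 : ℝ) ≤ 2)]
  have hγ₂0 : 0 ≤ γ₂ := by rw [hγ₂]; positivity
  have hγ₃0 : 0 < γ₃ := by rw [hγ₃]; positivity
  have lower (x y z : ℝ) : γ₁ * (x ^ 2 + y ^ 2 + z ^ 2) ≤ (1/σ) * x ^ 2 + y ^ 2 + z ^ 2 := by
    simpa [hγ₁, min_comm] using min_mul_sum_sq_le (1/σ) 1 1 x y z
  have upper (x y z : ℝ) : (1/σ) * x ^ 2 + y ^ 2 + z ^ 2 ≤ γ₃ * (x ^ 2 + y ^ 2 + z ^ 2) := by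
    simpa [hγ₃, max_comm] using le_max_mul_sum_sq (1/σ) 1 1 x y z
  have deriv_le (x y z : ℝ) : -2 * x ^ 2 + 2 * (r + 1) * x * y - 2 * y ^ 2 - 2 * b * z ^ 2
      ≤ -γ₂ * (x ^ 2 + y ^ 2 + z ^ 2) := by
    have := min_mul_sum_sq_le 1 (2 - (r + 1) ^ 2) (2 * b) x y z
    rw [← hγ₂] at this
    linarith [energy_deriv_le r b x y z]
  have decay (t : ℝ) (ht : 0 ≤ t) := lyapunov_exponential_decay hγ₂0 hγ₃0
    (hasDerivAt_energy hσ.ne' h₁ h₂ h₃) (fun s => upper (u₁ s) (u₂ s) (u₃ s))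
    (fun s => deriv_le (u₁ s) (u₂ s) (u₃ s)) ht
  intro t ht
  refine ⟨decay t ht, ?_⟩
  calc γ₁ * ((u₁ t)^2 + (u₂ t)^2 + (u₃ t)^2) ≤ (1/σ)*(u₁ t)^2 + (u₂ t)^2 + (u₃ t)^2 := lower ..
    _ ≤ ((1/σ)*(u₁ 0)^2 + (u₂ 0)^2 + (u₃ 0)^2) * exp (-(γ₂/γ₃) * t) := decay t ht
    _ ≤ γ₃ * ((u₁ 0)^2 + (u₂ 0)^2 + (u₃ 0)^2) * exp (-(γ₂/γ₃) * t) := by gcongr; exact upper ..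
end
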